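/- arXiv:2012.05500 — 6 statements merged into one kernel-verified Lean document; each statement's English description precedes it below -/
import Mathlib

section
/- lim_{ρ→0⁺} ρ² · Σ_{n=0}^{∞} Φ(-ρ√n) = 1/2, where Φ is the standard normal distribution function. -/
open Real MeasureTheory Filter

/-- The standard normal distribution function. -/
noncomputable def stdNormalCDF (y : ℝ) : ℝ :=
  (Real.sqrt (2 * Real.pi))⁻¹ * ∫ t in Set.Iic y, Real.exp (-t ^ 2 / 2)

/-!
Write `Φ(-x) = P(Z ≤ -x)` for `Z ~ N(0, 1)`. Since `Z ≤ -ρ√n` iff `Z ≤ 0` and `n ≤ Z²/ρ²`,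
Tonelli gives `∑ₙ Φ(-ρ√n) = E[⌊Z²/ρ²⌋ + 1; Z ≤ 0]`, which lies between
`E[Z²; Z ≤ 0]/ρ² = 1/(2ρ²)` and that plus `P(Z ≤ 0) = 1/2`, both halves coming from the
symmetry of the Gaussian.
-/

open Set ProbabilityTheory
open scoped ENNReal NNReal

lemma tsum_indicator_Iic_natCast {x : ℝ} (hx : 0 ≤ x) :
    ∑' n : ℕ, (Iic x).indicator (1 : ℝ → ℝ≥0∞) n = ⌊x⌋₊ + 1 := by
  have hmem : ∀ n : ℕ, (n : ℝ) ∈ Iic x ↔ n ∈ Finset.range (⌊x⌋₊ + 1) := by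
    intro n
    rw [mem_Iic, Finset.mem_range, Nat.lt_succ_iff, Nat.le_floor_iff hx]
  simp_rw [indicator_apply, hmem, Pi.one_apply]
  rw [tsum_eq_sum (s := Finset.range (⌊x⌋₊ + 1)) (fun n hn => if_neg hn), Finset.sum_ite_mem]
  simp

lemma le_neg_mul_sqrt_iff {ρ x t : ℝ} (hρ : 0 < ρ) :
    t ≤ -(ρ * √x) ↔ t ≤ 0 ∧ x ≤ t ^ 2 / ρ ^ 2 := by
  rw [show ρ * √x = √(ρ ^ 2 * x) by rw [sqrt_mul (sq_nonneg ρ), sqrt_sq hρ.le], le_neg,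
    sqrt_le_iff, neg_nonneg, neg_sq, le_div_iff₀ (by positivity), mul_comm]

lemma tsum_indicator_Iic_neg_mul_sqrt {ρ : ℝ} (hρ : 0 < ρ) (t : ℝ) :
    ∑' n : ℕ, (Iic (-(ρ * √n))).indicator (1 : ℝ → ℝ≥0∞) t =
      (Iic 0).indicator (fun s => (⌊s ^ 2 / ρ ^ 2⌋₊ : ℝ≥0∞) + 1) t := by
  by_cases ht : t ≤ 0
  · have hcount := tsum_indicator_Iic_natCast (div_nonneg (sq_nonneg t) (sq_nonneg ρ))
    rw [indicator_of_mem (mem_Iic.mpr ht), ← hcount]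
    congr 1 with n
    simp only [indicator_apply, mem_Iic, le_neg_mul_sqrt_iff hρ, ht, true_and, Pi.one_apply]
  · have hout : ∀ n : ℕ, t ∉ Iic (-(ρ * √n)) := fun n h =>
      ht ((le_neg_mul_sqrt_iff hρ).mp h).1
    simp [indicator_of_notMem, hout, ht]

lemma tsum_measure_Iic_neg_mul_sqrt (μ : Measure ℝ) {ρ : ℝ} (hρ : 0 < ρ) :
    ∑' n : ℕ, μ (Iic (-(ρ * √n))) = ∫⁻ t in Iic 0, (⌊t ^ 2 / ρ ^ 2⌋₊ + 1) ∂μ := by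
  rw [← lintegral_indicator measurableSet_Iic]
  simp_rw [← tsum_indicator_Iic_neg_mul_sqrt hρ]
  rw [lintegral_tsum fun n => (measurable_one.indicator measurableSet_Iic).aemeasurable]
  simp [lintegral_indicator_one measurableSet_Iic]

lemma setLIntegral_Iic_zero_of_even {μ : Measure ℝ} [μ.IsNegInvariant] [NullSingletonClass μ]
    {f : ℝ → ℝ≥0∞} (hf : f.Even) :
    ∫⁻ t in Iic 0, f t ∂μ = (∫⁻ t, f t ∂μ) / 2 := by
  have hsymm : ∫⁻ t in Ioi 0, f t ∂μ = ∫⁻ t in Iic 0, f t ∂μ := by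
    rw [restrict_Ioi_eq_restrict_Ici, ← lintegral_indicator measurableSet_Ici,
      ← lintegral_indicator measurableSet_Iic, ← lintegral_neg_eq_self]
    congr 1 with t
    simp [indicator_apply, hf t]
  rw [← lintegral_add_compl (μ := μ) f (measurableSet_Iic (a := 0)), compl_Iic, hsymm, ← mul_two,
    ENNReal.mul_div_cancel_right two_ne_zero ENNReal.ofNat_ne_top]

instance (v : ℝ≥0) : (gaussianReal 0 v).IsNegInvariant :=
  ⟨by rw [Measure.neg_def]; simpa using gaussianReal_map_neg (μ := 0) (v := v)⟩

lemma integral_sq_gaussianReal (v : ℝ≥0) : ∫ t, t ^ 2 ∂gaussianReal 0 v = v := by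
  simpa [variance_eq_integral measurable_id'.aemeasurable] using
    variance_fun_id_gaussianReal (μ := 0) (v := v)

lemma gaussianReal_Iic_zero {v : ℝ≥0} (hv : v ≠ 0) : gaussianReal 0 v (Iic 0) = 2⁻¹ := by
  have := nullSingletonClass_gaussianReal (μ := 0) hv
  simpa using setLIntegral_Iic_zero_of_even (μ := gaussianReal 0 v) (f := 1) fun _ => rfl

lemma setLIntegral_Iic_zero_sq_gaussianReal {v : ℝ≥0} (hv : v ≠ 0) :
    ∫⁻ t in Iic 0, ENNReal.ofReal (t ^ 2) ∂gaussianReal 0 v = v / 2 := by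
  have := nullSingletonClass_gaussianReal (μ := 0) hv
  have hsq : Integrable (fun t : ℝ => t ^ 2) (gaussianReal 0 v) :=
    (memLp_id_gaussianReal 2).integrable_sq
  rw [setLIntegral_Iic_zero_of_even fun t => by rw [neg_sq],
    ← ofReal_integral_eq_lintegral_ofReal hsq (ae_of_all _ fun t => sq_nonneg t),
    integral_sq_gaussianReal, ENNReal.ofReal_coe_nnreal]

lemma stdNormalCDF_eq_gaussianReal_real (y : ℝ) :
    stdNormalCDF y = (gaussianReal 0 1).real (Iic y) := by
  rw [measureReal_def, gaussianReal_apply_eq_integral 0 one_ne_zero, ENNReal.toReal_ofReal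
      (setIntegral_nonneg measurableSet_Iic fun t _ => gaussianPDFReal_nonneg 0 1 t),
    stdNormalCDF, ← integral_const_mul]
  simp [gaussianPDFReal]

lemma tsum_gaussianReal_Iic_neg_mul_sqrt_mem_Icc {v : ℝ≥0} (hv : v ≠ 0) {ρ : ℝ} (hρ : 0 < ρ) :
    ∑' n : ℕ, gaussianReal 0 v (Iic (-(ρ * √n))) ∈
      Icc (ENNReal.ofReal (ρ ^ 2)⁻¹ * (v / 2)) (ENNReal.ofReal (ρ ^ 2)⁻¹ * (v / 2) + 2⁻¹) := by
  set c := ENNReal.ofReal (ρ ^ 2)⁻¹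
  have hc : ∀ t : ℝ, c * ENNReal.ofReal (t ^ 2) = ENNReal.ofReal (t ^ 2 / ρ ^ 2) := fun t => by
    rw [← ENNReal.ofReal_mul (by positivity), inv_mul_eq_div]
  have hlow : ∀ t : ℝ, c * ENNReal.ofReal (t ^ 2) ≤ ⌊t ^ 2 / ρ ^ 2⌋₊ + 1 := fun t => by
    rw [hc]
    refine ENNReal.ofReal_le_of_le_toReal ?_
    exact_mod_cast (Nat.lt_floor_add_one _).le
  have hup : ∀ t : ℝ, (⌊t ^ 2 / ρ ^ 2⌋₊ : ℝ≥0∞) + 1 ≤ c * ENNReal.ofReal (t ^ 2) + 1 := fun t => by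
    rw [hc, ← ENNReal.ofReal_natCast]
    gcongr
    exact Nat.floor_le (by positivity)
  have hintegral : ∫⁻ t in Iic 0, c * ENNReal.ofReal (t ^ 2) ∂gaussianReal 0 v = c * (v / 2) := by
    rw [lintegral_const_mul' _ _ ENNReal.ofReal_ne_top, setLIntegral_Iic_zero_sq_gaussianReal hv]
  rw [tsum_measure_Iic_neg_mul_sqrt _ hρ]
  constructor
  · calc c * (v / 2) = ∫⁻ t in Iic 0, c * ENNReal.ofReal (t ^ 2) ∂gaussianReal 0 v := hintegral.symm
      _ ≤ _ := lintegral_mono hlow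
  · calc ∫⁻ t in Iic 0, (⌊t ^ 2 / ρ ^ 2⌋₊ + 1 : ℝ≥0∞) ∂gaussianReal 0 v
        ≤ ∫⁻ t in Iic 0, (c * ENNReal.ofReal (t ^ 2) + 1) ∂gaussianReal 0 v := lintegral_mono hup
      _ = c * (v / 2) + 2⁻¹ := by
        rw [lintegral_add_right _ measurable_const, hintegral, setLIntegral_one,
          gaussianReal_Iic_zero hv]

lemma sq_mul_tsum_stdNormalCDF_mem_Icc {ρ : ℝ} (hρ : 0 < ρ) :
    ρ ^ 2 * ∑' n : ℕ, stdNormalCDF (-(ρ * √n)) ∈ Icc (1 / 2) (1 / 2 + ρ ^ 2 / 2) := by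
  obtain ⟨hlow, hup⟩ := tsum_gaussianReal_Iic_neg_mul_sqrt_mem_Icc one_ne_zero hρ
  have hlow' := ENNReal.toReal_mono (ne_top_of_le_ne_top (by finiteness) hup) hlow
  have hup' := ENNReal.toReal_mono (by finiteness) hup
  simp_rw [stdNormalCDF_eq_gaussianReal_real, measureReal_def,
    ← ENNReal.tsum_toReal_eq fun n => measure_ne_top _ _]
  rw [ENNReal.toReal_add (by finiteness) (by finiteness)] at hup'
  simp only [ENNReal.toReal_mul, ENNReal.toReal_ofReal (by positivity : 0 ≤ (ρ ^ 2)⁻¹),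
    ENNReal.toReal_inv, ENNReal.coe_one, ENNReal.toReal_div, ENNReal.toReal_one,
    ENNReal.toReal_ofNat] at hlow' hup'
  have hρρ : ρ ^ 2 * (ρ ^ 2)⁻¹ = 1 := mul_inv_cancel₀ (by positivity)
  constructor <;> nlinarith

theorem tendsto_rho_sq_tsum_stdNormalCDF :
    Tendsto (fun ρ : ℝ => ρ ^ 2 * ∑' n : ℕ, stdNormalCDF (-(ρ * Real.sqrt n)))
      (nhdsWithin 0 (Set.Ioi 0)) (nhds (1 / 2)) := by
  have hup : Tendsto (fun ρ : ℝ => 1 / 2 + ρ ^ 2 / 2) (nhdsWithin 0 (Ioi 0)) (nhds (1 / 2)) := by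
    have : Continuous (fun ρ : ℝ => 1 / 2 + ρ ^ 2 / 2) := by fun_prop
    simpa using (this.tendsto 0).mono_left nhdsWithin_le_nhds
  refine tendsto_of_tendsto_of_tendsto_of_le_of_le' tendsto_const_nhds hup ?_ ?_ <;>
    filter_upwards [self_mem_nhdsWithin] with ρ hρ
  exacts [(sq_mul_tsum_stdNormalCDF_mem_Icc hρ).1, (sq_mul_tsum_stdNormalCDF_mem_Icc hρ).2]
end

section
/- For every ρ > 0, the bound ρ⁻²/2 ≤ Σ_{n=0}^{∞} Φ(-ρ√n) ≤ ρ⁻²/2 + 1 holds, where Φ is the standard normal distribution function. -/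
open Real MeasureTheory Filter

namespace TsumStdNormalAux

open Set

noncomputable def g (t : ℝ) : ℝ := Real.exp (-t ^ 2 / 2)

lemma g_eq (t : ℝ) : g t = Real.exp (-(1/2) * t ^ 2) := by
  exact Real.exp_eq_exp.2 (by ring)

lemma g_nonneg (t : ℝ) : 0 ≤ g t := (Real.exp_pos _).le

lemma g_int : Integrable g := by
  have h := integrable_exp_neg_mul_sq (by norm_num : (0:ℝ) < 1/2)
  exact h.congr (Eventually.of_forall fun t => (g_eq t).symm)

lemma sq_g_int : Integrable (fun t : ℝ => t ^ 2 * g t) := by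
  have h := integrable_rpow_mul_exp_neg_mul_sq (by norm_num : (0:ℝ) < 1/2)
    (by norm_num : (-1:ℝ) < 2)
  refine h.congr (Eventually.of_forall fun t => ?_)
  have h2 : t ^ (2:ℝ) = t ^ 2 := by
    rw [show (2:ℝ) = ((2:ℕ):ℝ) by norm_num, Real.rpow_natCast]
  simp only [g_eq, h2]

lemma int_g_Ioi : ∫ t in Set.Ioi (0:ℝ), g t = Real.sqrt (2 * π) / 2 := by
  have h := integral_gaussian_Ioi (1/2 : ℝ)
  rw [show (π / (1/2) : ℝ) = 2 * π by ring] at h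
  rw [← h]
  exact setIntegral_congr_fun measurableSet_Ioi fun t _ => g_eq t

lemma int_sq_g_Ioi : ∫ t in Set.Ioi (0:ℝ), t ^ 2 * g t = Real.sqrt (2 * π) / 2 := by
  have hd : ∀ x ∈ Set.Ici (0:ℝ),
      HasDerivAt (fun x : ℝ => -x * g x) ((x ^ 2 - 1) * g x) x := by
    intro x _
    have h1 : HasDerivAt (fun x : ℝ => -x) (-1) x := (hasDerivAt_id x).neg
    have h2 : HasDerivAt (fun x : ℝ => -x ^ 2 / 2) (-x) x := by
      have := ((hasDerivAt_pow 2 x).neg).div_const 2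
      exact this.congr_deriv (by ring)
    have h3 : HasDerivAt g (g x * (-x)) x := (Real.hasDerivAt_exp _).comp x h2
    have h4 := h1.mul h3
    exact h4.congr_deriv (by unfold g; ring)
  have hint : IntegrableOn (fun x : ℝ => (x ^ 2 - 1) * g x) (Set.Ioi 0) := by
    have h : Integrable (fun x : ℝ => x ^ 2 * g x - g x) := sq_g_int.sub g_int
    exact (h.congr (Eventually.of_forall fun x => by ring)).integrableOn
  have htend : Tendsto (fun x : ℝ => -x * g x) atTop (nhds 0) := by
    have hlo := rpow_mul_exp_neg_mul_sq_isLittleO_exp_neg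
      (by norm_num : (0:ℝ) < 1/2) 1
    have h0 : Tendsto (fun x : ℝ => Real.exp (-(1/2) * x)) atTop (nhds 0) := by
      have hb : Tendsto (fun x : ℝ => -(1/2) * x) atTop atBot :=
        (tendsto_const_mul_atBot_of_neg (by norm_num)).2 tendsto_id
      exact Real.tendsto_exp_atBot.comp hb
    have h1 : Tendsto (fun x : ℝ => x ^ (1:ℝ) * Real.exp (-(1/2) * x ^ 2))
        atTop (nhds 0) := hlo.tendsto_zero_of_tendsto h0
    have h2 : Tendsto (fun x : ℝ => x * g x) atTop (nhds 0) := by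
      refine h1.congr' ?_
      filter_upwards [eventually_ge_atTop (0:ℝ)] with x hx
      rw [Real.rpow_one, g_eq]
    have h3 := h2.neg
    simp only [neg_mul] at h3 ⊢
    simpa using h3
  have key := integral_Ioi_of_hasDerivAt_of_tendsto'
    (f := fun x : ℝ => -x * g x) (f' := fun x => (x ^ 2 - 1) * g x) hd hint htend
  simp only [neg_zero, zero_mul, sub_zero] at key
  have hsplit : ∫ x in Set.Ioi (0:ℝ), (x ^ 2 - 1) * g x
      = (∫ x in Set.Ioi (0:ℝ), x ^ 2 * g x) - ∫ x in Set.Ioi (0:ℝ), g x := by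
    rw [← integral_sub sq_g_int.integrableOn g_int.integrableOn]
    exact setIntegral_congr_fun measurableSet_Ioi fun x _ => by ring
  rw [hsplit, int_g_Ioi] at key
  linarith

lemma cdf_eq (a : ℝ) :
    stdNormalCDF (-a) = (Real.sqrt (2 * π))⁻¹ * ∫ t in Set.Ioi a, g t := by
  unfold stdNormalCDF
  congr 1
  rw [← integral_comp_neg_Ioi]
  exact (setIntegral_congr_fun measurableSet_Ioi fun t _ => by
    unfold g; rw [neg_sq]).symm

variable {ρ : ℝ} (hρ : 0 < ρ)

/-- The indicator summands. -/
noncomputable def f (ρ : ℝ) (n : ℕ) (t : ℝ) : ℝ := (Ioi (ρ * Real.sqrt n)).indicator g t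

include hρ

lemma mem_iff (n : ℕ) (t : ℝ) : t ∈ Ioi (ρ * Real.sqrt n) ↔ (n : ℝ) < (t / ρ) ^ 2 ∧ 0 < t := by
  constructor
  · intro ht
    have ht' : ρ * Real.sqrt n < t := ht
    have h0 : 0 < t := lt_of_le_of_lt (by positivity) ht'
    refine ⟨?_, h0⟩
    rw [← Real.sqrt_lt' (by positivity)]
    rw [lt_div_iff₀ hρ]
    linarith [ht']
  · rintro ⟨h1, h2⟩
    have h3 : Real.sqrt n < t / ρ := (Real.sqrt_lt' (by positivity)).2 h1
    have := (lt_div_iff₀ hρ).1 h3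
    simpa [Set.mem_Ioi, mul_comm] using this

lemma tsum_pos_eq {t : ℝ} (ht : 0 < t) :
    ∑' n, f ρ n t = (⌈(t / ρ) ^ 2⌉₊ : ℝ) * g t := by
  have heval : ∀ n : ℕ, f ρ n t = if n ∈ Finset.range ⌈(t / ρ) ^ 2⌉₊ then g t else 0 := by
    intro n
    unfold f
    simp only [Finset.mem_range, Nat.lt_ceil]
    by_cases h : (n:ℝ) < (t / ρ) ^ 2
    · rw [Set.indicator_of_mem ((mem_iff hρ n t).2 ⟨h, ht⟩), if_pos h]
    · rw [Set.indicator_of_notMem (fun hmem' => h ((mem_iff hρ n t).1 hmem').1), if_neg h]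
  rw [tsum_eq_sum (s := Finset.range ⌈(t / ρ) ^ 2⌉₊)
    (fun n hn => by rw [heval n, if_neg hn])]
  rw [Finset.sum_congr rfl (fun n hn => by rw [heval n, if_pos hn])]
  simp [mul_comm]

lemma tsum_nonpos_eq {t : ℝ} (ht : t ≤ 0) : ∑' n, f ρ n t = 0 := by
  have h : ∀ n : ℕ, f ρ n t = 0 := by
    intro n
    apply Set.indicator_of_notMem
    intro hmem'
    exact absurd ((mem_iff hρ n t).1 hmem').2 (not_lt.2 ht)
  simp [h]

lemma tsum_f_eq : (fun t => ∑' n, f ρ n t)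
    = Set.indicator (Ioi 0) (fun t => (⌈(t / ρ) ^ 2⌉₊ : ℝ) * g t) := by
  funext t
  rcases lt_or_ge 0 t with h | h
  · rw [tsum_pos_eq hρ h, Set.indicator_of_mem (Set.mem_Ioi.2 h)]
  · rw [tsum_nonpos_eq hρ h, Set.indicator_of_notMem (by simpa using h)]

omit hρ in
lemma f_int (n : ℕ) : Integrable (f ρ n) :=
  (integrable_indicator_iff measurableSet_Ioi).2 g_int.integrableOn

lemma f_sum : Summable fun n : ℕ => ∫ t, ‖f ρ n t‖ := by
  have hC : Integrable (fun t : ℝ => Real.exp (-t ^ 2 / 4)) := by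
    have h := integrable_exp_neg_mul_sq (by norm_num : (0:ℝ) < 1/4)
    exact h.congr (Eventually.of_forall fun t => Real.exp_eq_exp.2 (by ring))
  set C : ℝ := ∫ t : ℝ, Real.exp (-t ^ 2 / 4) with hC'
  have hbound : ∀ n : ℕ, ∫ t, ‖f ρ n t‖ ≤ Real.exp (-ρ ^ 2 / 4) ^ n * C := by
    intro n
    have h1 : ∀ t, ‖f ρ n t‖ ≤ Real.exp (-ρ ^ 2 / 4) ^ n * Real.exp (-t ^ 2 / 4) := by
      intro t
      rw [← Real.exp_nat_mul, ← Real.exp_add]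
      unfold f
      by_cases ht : t ∈ Ioi (ρ * Real.sqrt n)
      · rw [Set.indicator_of_mem ht, Real.norm_of_nonneg (g_nonneg t)]
        unfold g
        apply Real.exp_le_exp.2
        have h2 : ρ * Real.sqrt n < t := ht
        have h4 : (ρ * Real.sqrt n) ^ 2 ≤ t ^ 2 :=
          pow_le_pow_left₀ (by positivity) h2.le 2
        rw [mul_pow, Real.sq_sqrt (Nat.cast_nonneg n)] at h4
        nlinarith
      · rw [Set.indicator_of_notMem ht]
        simp only [norm_zero]
        positivity
    calc ∫ t, ‖f ρ n t‖ ≤ ∫ t, Real.exp (-ρ ^ 2 / 4) ^ n * Real.exp (-t ^ 2 / 4) :=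
          integral_mono (f_int n).norm (hC.const_mul _) h1
      _ = Real.exp (-ρ ^ 2 / 4) ^ n * C := by rw [integral_const_mul]
  apply Summable.of_nonneg_of_le (fun n => integral_nonneg fun t => norm_nonneg _) hbound
  apply Summable.mul_right
  apply summable_geometric_of_lt_one (Real.exp_pos _).le
  apply Real.exp_lt_one_iff.2
  have h : (0:ℝ) < ρ ^ 2 / 4 := by positivity
  linarith

end TsumStdNormalAux

open TsumStdNormalAux Set

theorem tsum_stdNormalCDF_bounds (ρ : ℝ) (hρ : 0 < ρ) :
    ρ⁻¹ ^ 2 / 2 ≤ ∑' n : ℕ, stdNormalCDF (-(ρ * Real.sqrt n)) ∧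
    ∑' n : ℕ, stdNormalCDF (-(ρ * Real.sqrt n)) ≤ ρ⁻¹ ^ 2 / 2 + 1 := by
  set c : ℝ := (Real.sqrt (2 * π))⁻¹ with hc
  have hπ : 0 < 2 * π := by positivity
  have hsqrt : (0:ℝ) < Real.sqrt (2 * π) := Real.sqrt_pos.2 hπ
  have hc_pos : 0 < c := by positivity
  -- interchange
  have hS : ∑' n : ℕ, stdNormalCDF (-(ρ * Real.sqrt n)) = c * ∫ t, ∑' n, f ρ n t := by
    have h1 : ∀ n : ℕ, stdNormalCDF (-(ρ * Real.sqrt n)) = c * ∫ t, f ρ n t := by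
      intro n
      rw [cdf_eq]
      congr 1
      rw [show f ρ n = (Ioi (ρ * Real.sqrt n)).indicator g from rfl,
        integral_indicator measurableSet_Ioi]
    simp_rw [h1]
    rw [tsum_mul_left]
    congr 1
    exact integral_tsum_of_summable_integral_norm (f_int) (f_sum hρ)
  -- integrability of the upper bound function and of F
  have hup_int : Integrable (fun t : ℝ => ((t / ρ) ^ 2 + 1) * g t) := by
    have h : Integrable (fun t : ℝ => ρ⁻¹ ^ 2 * (t ^ 2 * g t) + g t) :=
      (sq_g_int.const_mul _).add g_int
    refine h.congr (Eventually.of_forall fun t => by ring)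
  have hF_le : ∀ t, (∑' n, f ρ n t) ≤ Set.indicator (Ioi 0)
      (fun t => ((t / ρ) ^ 2 + 1) * g t) t := by
    intro t
    rcases lt_or_ge 0 t with h | h
    · rw [tsum_pos_eq hρ h, Set.indicator_of_mem (Set.mem_Ioi.2 h)]
      apply mul_le_mul_of_nonneg_right _ (g_nonneg t)
      exact (Nat.ceil_lt_add_one (by positivity)).le
    · rw [tsum_nonpos_eq hρ h, Set.indicator_of_notMem (by simpa using h)]
  have hF_nonneg : ∀ t, 0 ≤ ∑' n, f ρ n t := by
    intro t
    exact tsum_nonneg fun n => Set.indicator_nonneg (fun x _ => g_nonneg x) t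
  have hF_meas : AEStronglyMeasurable (fun t => ∑' n, f ρ n t) volume := by
    rw [tsum_f_eq hρ]
    apply Measurable.aestronglyMeasurable
    apply Measurable.indicator _ measurableSet_Ioi
    apply Measurable.mul _ (by unfold g; fun_prop)
    exact measurable_from_top.comp ((measurable_id.div_const ρ).pow_const 2).nat_ceil
  have hF_int : Integrable (fun t => ∑' n, f ρ n t) := by
    apply Integrable.mono'
      ((hup_int.integrableOn).integrable_indicator measurableSet_Ioi) hF_meas
    refine Eventually.of_forall fun t => ?_
    rw [Real.norm_of_nonneg (hF_nonneg t)]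
    exact hF_le t
  -- key integral values
  have hup_val : ∫ t, Set.indicator (Ioi 0) (fun t => ((t / ρ) ^ 2 + 1) * g t) t
      = ρ⁻¹ ^ 2 * (Real.sqrt (2 * π) / 2) + Real.sqrt (2 * π) / 2 := by
    rw [integral_indicator measurableSet_Ioi]
    have hsplit : ∫ t in Ioi (0:ℝ), ((t / ρ) ^ 2 + 1) * g t
        = ρ⁻¹ ^ 2 * (∫ t in Ioi (0:ℝ), t ^ 2 * g t) + ∫ t in Ioi (0:ℝ), g t := by
      rw [← integral_const_mul, ← integral_add ((sq_g_int.integrableOn).const_mul _)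
        g_int.integrableOn]
      exact setIntegral_congr_fun measurableSet_Ioi fun t _ => by ring
    rw [hsplit, int_sq_g_Ioi, int_g_Ioi]
  have hlow_val : ∫ t, Set.indicator (Ioi 0) (fun t => (t / ρ) ^ 2 * g t) t
      = ρ⁻¹ ^ 2 * (Real.sqrt (2 * π) / 2) := by
    rw [integral_indicator measurableSet_Ioi]
    rw [show (fun t : ℝ => (t / ρ) ^ 2 * g t) = fun t => ρ⁻¹ ^ 2 * (t ^ 2 * g t) from
      funext fun t => by ring]
    rw [integral_const_mul, int_sq_g_Ioi]
  constructor
  · -- lower bound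
    rw [hS]
    have hmono : ∫ t, Set.indicator (Ioi 0) (fun t => (t / ρ) ^ 2 * g t) t
        ≤ ∫ t, ∑' n, f ρ n t := by
      apply integral_mono_of_nonneg
      · exact Eventually.of_forall fun t =>
          Set.indicator_nonneg (fun x _ => mul_nonneg (sq_nonneg _) (g_nonneg x)) t
      · exact hF_int
      · refine Eventually.of_forall fun t => ?_
        dsimp only
        rcases lt_or_ge 0 t with h | h
        · rw [Set.indicator_of_mem (Set.mem_Ioi.2 h), tsum_pos_eq hρ h]
          apply mul_le_mul_of_nonneg_right _ (g_nonneg t)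
          exact Nat.le_ceil _
        · rw [Set.indicator_of_notMem (by simpa using h)]
          exact hF_nonneg t
    rw [hlow_val] at hmono
    have hcs : c * Real.sqrt (2 * π) = 1 := inv_mul_cancel₀ hsqrt.ne'
    calc ρ⁻¹ ^ 2 / 2 = c * (ρ⁻¹ ^ 2 * (Real.sqrt (2 * π) / 2)) := by
          rw [show c * (ρ⁻¹ ^ 2 * (Real.sqrt (2 * π) / 2))
            = c * Real.sqrt (2 * π) * ρ⁻¹ ^ 2 / 2 by ring, hcs]; ring
      _ ≤ c * ∫ t, ∑' n, f ρ n t := mul_le_mul_of_nonneg_left hmono hc_pos.le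
  · -- upper bound
    rw [hS]
    have hmono : ∫ t, (∑' n, f ρ n t)
        ≤ ∫ t, Set.indicator (Ioi 0) (fun t => ((t / ρ) ^ 2 + 1) * g t) t :=
      integral_mono hF_int
        ((hup_int.integrableOn).integrable_indicator measurableSet_Ioi) hF_le
    rw [hup_val] at hmono
    calc c * ∫ t, ∑' n, f ρ n t
        ≤ c * (ρ⁻¹ ^ 2 * (Real.sqrt (2 * π) / 2) + Real.sqrt (2 * π) / 2) :=
          mul_le_mul_of_nonneg_left hmono hc_pos.le
      _ = ρ⁻¹ ^ 2 / 2 + 1 / 2 := by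
          have hcs : c * Real.sqrt (2 * π) = 1 := inv_mul_cancel₀ hsqrt.ne'
          rw [show c * (ρ⁻¹ ^ 2 * (Real.sqrt (2 * π) / 2) + Real.sqrt (2 * π) / 2)
            = c * Real.sqrt (2 * π) * (ρ⁻¹ ^ 2 + 1) / 2 by ring, hcs]; ring
      _ ≤ ρ⁻¹ ^ 2 / 2 + 1 := by linarith
end

section
/- Let a < b be integers and f have a continuous derivative on [a,b]. Then Σ_{n=a}^{b} f(n) = ∫_a^b f(x)dx + ∫_a^b f'(x)ψ(x)dx + (f(a)+f(b))/2, where ψ(x) = x - ⌊x⌋ - 1/2. -/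
/-!
On `[n, n + 1)` the sawtooth `ψ` equals `x - n - 1/2`, which has derivative `1` and takes the
values `∓1/2` at the endpoints, so integrating `f' ψ` by parts over `[n, n + 1]` gives
`∫ f + ∫ f' ψ = (f n + f (n + 1)) / 2`. Summing these over the unit intervals of `[a, b]`
counts every interior integer once and each endpoint half.
-/

open MeasureTheory intervalIntegral Set

noncomputable def sawtooth (x : ℝ) : ℝ := x - ⌊x⌋ - 1 / 2

lemma sawtooth_eq_fract_sub (x : ℝ) : sawtooth x = Int.fract x - 1 / 2 := rfl

lemma sawtooth_eq_of_mem_Ico {n : ℤ} {x : ℝ} (hx : x ∈ Ico (n : ℝ) (n + 1)) :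
    sawtooth x = x - n - 1 / 2 := by
  rw [sawtooth, Int.floor_eq_iff.mpr hx]

lemma abs_sawtooth_le (x : ℝ) : |sawtooth x| ≤ 1 / 2 := by
  rw [sawtooth_eq_fract_sub, abs_le]
  constructor <;> linarith [Int.fract_nonneg x, Int.fract_lt_one x]

lemma measurable_sawtooth : Measurable sawtooth :=
  measurable_fract.sub_const _

lemma IntervalIntegrable.mul_sawtooth {μ : Measure ℝ} {g : ℝ → ℝ} {a b : ℝ}
    (hg : IntervalIntegrable g μ a b) :
    IntervalIntegrable (fun x => g x * sawtooth x) μ a b := by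
  have hbound : ∀ ν : Measure ℝ, ∀ᵐ x ∂ν, ‖sawtooth x‖ ≤ 1 / 2 :=
    fun _ => Filter.Eventually.of_forall abs_sawtooth_le
  exact ⟨hg.1.mul_bdd measurable_sawtooth.aestronglyMeasurable (hbound _),
    hg.2.mul_bdd measurable_sawtooth.aestronglyMeasurable (hbound _)⟩

lemma integral_add_integral_deriv_mul_sawtooth_unit {f f' : ℝ → ℝ} (n : ℤ)
    (hf : ∀ x ∈ Icc (n : ℝ) (n + 1), HasDerivAt f (f' x) x)
    (hf' : IntervalIntegrable f' volume n (n + 1)) :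
    (∫ x in (n : ℝ)..n + 1, f x) + (∫ x in (n : ℝ)..n + 1, f' x * sawtooth x) =
      (f n + f (n + 1)) / 2 := by
  have hle : (n : ℝ) ≤ n + 1 := by linarith
  rw [← uIcc_of_le hle] at hf
  set v : ℝ → ℝ := fun x => x - n - 1 / 2
  have hv : ∀ x ∈ uIcc (n : ℝ) (n + 1), HasDerivAt v 1 x :=
    fun x _ => ((hasDerivAt_id x).sub_const _).sub_const _
  have hfint : IntervalIntegrable f volume n (n + 1) :=
    ContinuousOn.intervalIntegrable fun x hx => (hf x hx).continuousAt.continuousWithinAt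
  have hf'v : IntervalIntegrable (fun x => f' x * v x) volume n (n + 1) :=
    hf'.mul_continuousOn (by fun_prop)
  have hψ : ∫ x in (n : ℝ)..n + 1, f' x * sawtooth x = ∫ x in (n : ℝ)..n + 1, f' x * v x :=
    integral_congr_Ioo_of_le hle fun x hx => by rw [sawtooth_eq_of_mem_Ico (Ioo_subset_Ico_self hx)]
  have ibp := integral_deriv_mul_eq_sub hf hv hf' intervalIntegrable_const
  simp only [mul_one] at ibp
  rw [integral_add hf'v hfint] at ibp
  rw [hψ]
  simp only [v] at ibp
  linarith

theorem sum_Icc_eq_integral_add_integral_deriv_mul_sawtooth {f f' : ℝ → ℝ} {a b : ℤ}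
    (hab : a ≤ b) (hf : ∀ x ∈ Icc (a : ℝ) b, HasDerivAt f (f' x) x)
    (hf' : IntervalIntegrable f' volume a b) :
    ∑ n ∈ Finset.Icc a b, f n =
      (∫ x in (a : ℝ)..b, f x) + (∫ x in (a : ℝ)..b, f' x * sawtooth x) +
        (f a + f b) / 2 := by
  induction b, hab using Int.leInduction with
  | base => simp
  | succ b hab ih =>
    push_cast at hf hf' ⊢
    have hab' : (a : ℝ) ≤ b := by exact_mod_cast hab
    have hb_mem : (b : ℝ) ∈ uIcc (a : ℝ) (b + 1) := mem_uIcc_of_le hab' (by linarith)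
    have hleft : uIcc (a : ℝ) b ⊆ uIcc (a : ℝ) (b + 1) :=
      uIcc_subset_uIcc left_mem_uIcc hb_mem
    have hright : uIcc (b : ℝ) (b + 1) ⊆ uIcc (a : ℝ) (b + 1) :=
      uIcc_subset_uIcc hb_mem right_mem_uIcc
    rw [← uIcc_of_le (by linarith)] at hf
    have hfc : ContinuousOn f (uIcc (a : ℝ) (b + 1)) :=
      fun x hx => (hf x hx).continuousAt.continuousWithinAt
    have hunit := integral_add_integral_deriv_mul_sawtooth_unit b
      (fun x hx => hf x (hright (Icc_subset_uIcc hx))) (hf'.mono_set hright)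
    rw [← Finset.insert_Icc_right_eq_Icc_add_one (by omega), Finset.sum_insert (by simp),
      ih (fun x hx => hf x (hleft (Icc_subset_uIcc hx))) (hf'.mono_set hleft),
      ← integral_add_adjacent_intervals ((hfc.mono hleft).intervalIntegrable)
        ((hfc.mono hright).intervalIntegrable),
      ← integral_add_adjacent_intervals (hf'.mono_set hleft).mul_sawtooth
        (hf'.mono_set hright).mul_sawtooth]
    push_cast
    linarith

theorem euler_maclaurin_first_order (a b : ℤ) (hab : a < b) (f f' : ℝ → ℝ)
    (hderiv : ∀ x ∈ Set.Icc (a : ℝ) b, HasDerivAt f (f' x) x)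
    (hcont : ContinuousOn f' (Set.Icc (a : ℝ) b)) :
    ∑ n ∈ Finset.Icc a b, f n =
      (∫ x in (a : ℝ)..b, f x) +
      (∫ x in (a : ℝ)..b, f' x * (x - ⌊x⌋ - 1 / 2)) +
      (f a + f b) / 2 :=
  sum_Icc_eq_integral_add_integral_deriv_mul_sawtooth hab.le hderiv
    (hcont.intervalIntegrable_of_Icc (by exact_mod_cast hab.le))
end

section
/- Let a be an integer and let f : [a,∞) → ℝ have a continuous derivative, with f(x) → 0 as x → ∞, and suppose the improper integrals ∫_a^∞ f(x)dx and ∫_a^∞ f'(x)ψ(x)dx converge, where ψ(x) = x - ⌊x⌋ - 1/2. Then Σ_{n=a}^{∞} f(n) = ∫_a^∞ f(x)dx + ∫_a^∞ f'(x)ψ(x)dx + f(a)/2. -/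
open Real MeasureTheory Filter

set_option maxHeartbeats 1000000

theorem euler_maclaurin_first_order_infinite (a : ℤ) (f f' : ℝ → ℝ)
    (hderiv : ∀ x ∈ Set.Ici (a : ℝ), HasDerivAt f (f' x) x)
    (hcont : ContinuousOn f' (Set.Ici (a : ℝ)))
    (hlim : Tendsto f atTop (nhds 0))
    (hint : IntegrableOn f (Set.Ici (a : ℝ)))
    (hint' : IntegrableOn (fun x => f' x * (x - ⌊x⌋ - 1 / 2)) (Set.Ici (a : ℝ))) :
    ∑' n : ℕ, f (a + n) =
      (∫ x in Set.Ici (a : ℝ), f x) +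
      (∫ x in Set.Ici (a : ℝ), f' x * (x - ⌊x⌋ - 1 / 2)) +
      f a / 2 := by
  set ψ : ℝ → ℝ := fun x => x - ⌊x⌋ - 1 / 2 with hψ
  set F : ℝ → ℝ := fun x => f' x * ψ x + f x with hF
  have fcont : ContinuousOn f (Set.Ici (a : ℝ)) :=
    fun x hx => (hderiv x hx).continuousAt.continuousWithinAt
  have hintF : IntegrableOn F (Set.Ici (a : ℝ)) := hint'.add hint
  -- key integration by parts identity on [k, u] for k < u ≤ k+1
  have key : ∀ k : ℤ, (a : ℝ) ≤ k → ∀ u : ℝ, (k : ℝ) < u → u ≤ (k : ℝ) + 1 →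
      ∫ x in (k : ℝ)..u, F x = f u * (u - ((k : ℝ) + 1 / 2)) + f k / 2 := by
    intro k hk u hku hu1
    have hsub : Set.uIcc (k : ℝ) u ⊆ Set.Ici (a : ℝ) := by
      rw [Set.uIcc_of_le hku.le]
      exact fun x hx => le_trans hk hx.1
    have hG : ∀ x ∈ Set.uIcc (k : ℝ) u,
        HasDerivAt (fun y => f y * (y - ((k : ℝ) + 1 / 2)))
          (f' x * (x - ((k : ℝ) + 1 / 2)) + f x * 1) x := by
      intro x hx
      exact (hderiv x (hsub hx)).mul ((hasDerivAt_id x).sub_const _)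
    have hconti : IntervalIntegrable
        (fun x => f' x * (x - ((k : ℝ) + 1 / 2)) + f x * 1) volume (k : ℝ) u := by
      apply ContinuousOn.intervalIntegrable
      apply ContinuousOn.add
      · exact ((hcont.mono hsub).mul ((continuousOn_id.sub continuousOn_const)))
      · exact (fcont.mono hsub).mul continuousOn_const
    have h1 := intervalIntegral.integral_eq_sub_of_hasDerivAt hG hconti
    have h2 : ∫ x in (k : ℝ)..u, F x
        = ∫ x in (k : ℝ)..u, (f' x * (x - ((k : ℝ) + 1 / 2)) + f x * 1) := by
      apply intervalIntegral.integral_congr_ae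
      have hnull : (volume : Measure ℝ) {((k : ℝ) + 1)} = 0 := measure_singleton _
      filter_upwards [measure_eq_zero_iff_ae_notMem.mp hnull] with x hx hxI
      rw [Set.uIoc_of_le hku.le] at hxI
      have hfl : ⌊x⌋ = k := by
        rw [Int.floor_eq_iff]
        constructor
        · exact hxI.1.le
        · rcases lt_or_eq_of_le (hxI.2.trans hu1) with h | h
          · exact_mod_cast h
          · exact absurd h (by simpa using hx)
      simp only [hF, hψ, hfl]
      ring
    rw [h2, h1]
    ring
  -- interval integrability of functions integrable on Ici a
  have hII : ∀ (g : ℝ → ℝ), IntegrableOn g (Set.Ici (a : ℝ)) →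
      ∀ c d : ℝ, (a : ℝ) ≤ c → c ≤ d → IntervalIntegrable g volume c d := by
    intro g hg c d hc hcd
    rw [intervalIntegrable_iff_integrableOn_Ioc_of_le hcd]
    exact hg.mono_set (fun x hx => le_trans hc hx.1.le)
  have habs : IntegrableOn (fun x => |f' x * ψ x| + |f x|) (Set.Ici (a : ℝ)) :=
    hint'.abs.add hint.abs
  have habs_nonneg : ∀ x : ℝ, 0 ≤ |f' x * ψ x| + |f x| :=
    fun x => add_nonneg (abs_nonneg _) (abs_nonneg _)
  set pt : ℕ → ℝ := fun n => (a : ℝ) + n with hpt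
  have hc0 : pt 0 = (a : ℝ) := by simp [hpt]
  have hcs : ∀ n : ℕ, pt (n + 1) = pt n + 1 := by intro n; simp [hpt]; push_cast; ring
  have hca : ∀ n : ℕ, (a : ℝ) ≤ pt n := fun n => le_add_of_nonneg_right (Nat.cast_nonneg n)
  have hank : ∀ n : ℕ, ((a + (n : ℤ) : ℤ) : ℝ) = pt n := by intro n; simp [hpt]
  set g : ℕ → ℝ := fun n => ∫ x in pt n..pt (n + 1), (|f' x * ψ x| + |f x|) with hg
  have hgsum : Summable g := by
    apply summable_of_sum_range_le (c := ∫ x in Set.Ici (a : ℝ), (|f' x * ψ x| + |f x|))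
    · intro n
      simp only [hg]
      apply intervalIntegral.integral_nonneg (by rw [hcs]; linarith)
      intro x _
      exact habs_nonneg x
    · intro N
      have hadj : ∑ n ∈ Finset.range N,
          ∫ x in pt n..pt (n + 1), (|f' x * ψ x| + |f x|)
          = ∫ x in (pt 0)..(pt N), (|f' x * ψ x| + |f x|) := by
        apply intervalIntegral.sum_integral_adjacent_intervals
        intro k _
        exact hII _ habs _ _ (hca k) (by rw [hcs]; linarith)
      simp only [hg]
      rw [hadj, hc0, intervalIntegral.integral_of_le (hc0 ▸ hca N)]
      apply setIntegral_mono_set habs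
      · filter_upwards with x using habs_nonneg x
      · exact HasSubset.Subset.eventuallyLE (fun x hx => le_of_lt hx.1)
  have hbound : ∀ n : ℕ, |f (pt n)| ≤ 2 * g n := by
    intro n
    have hk := key (a + n) (by push_cast; linarith [Nat.cast_nonneg (α := ℝ) n])
      (pt n + 1 / 2) (by rw [hank n]; try linarith) (by rw [hank n]; try linarith)
    rw [hank n] at hk
    have hval : f (pt n) = 2 * ∫ x in pt n..(pt n + 1 / 2), F x := by
      rw [hk]; ring
    rw [hval, abs_mul, abs_two]
    have h1 : |∫ x in pt n..(pt n + 1 / 2), F x|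
        ≤ ∫ x in pt n..(pt n + 1 / 2), |F x| :=
      intervalIntegral.abs_integral_le_integral_abs (by linarith)
    have h2 : ∫ x in pt n..(pt n + 1 / 2), |F x|
        ≤ ∫ x in pt n..(pt n + 1 / 2), (|f' x * ψ x| + |f x|) := by
      apply intervalIntegral.integral_mono_on (by linarith)
      · exact (hII F hintF _ _ (hca n) (by linarith)).abs
      · exact hII _ habs _ _ (hca n) (by linarith)
      · intro x _
        exact abs_add_le _ _
    have h3 : ∫ x in pt n..(pt n + 1 / 2), (|f' x * ψ x| + |f x|) ≤ g n := by
      simp only [hg]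
      rw [intervalIntegral.integral_of_le (by linarith),
        intervalIntegral.integral_of_le (by rw [hcs]; linarith)]
      apply setIntegral_mono_set (habs.mono_set (fun x hx => le_trans (hca n) hx.1.le))
      · filter_upwards with x using habs_nonneg x
      · exact HasSubset.Subset.eventuallyLE (Set.Ioc_subset_Ioc le_rfl (by rw [hcs]; linarith))
    nlinarith [abs_nonneg (∫ x in pt n..(pt n + 1 / 2), F x)]
  have hsumm : Summable (fun n : ℕ => f (pt n)) := by
    apply Summable.of_abs
    exact Summable.of_nonneg_of_le (fun n => abs_nonneg _) hbound (hgsum.mul_left 2)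
  -- partial sums identity
  have hpartial : ∀ N : ℕ, ∑ n ∈ Finset.range N, f (pt n)
      = (∫ x in (a : ℝ)..(pt N), F x) + f a / 2 - f (pt N) / 2 := by
    intro N
    induction N with
    | zero => simp [hc0]
    | succ N ih =>
      have hsplit : (∫ x in (a : ℝ)..(pt N), F x) + (∫ x in (pt N)..(pt (N + 1)), F x)
          = ∫ x in (a : ℝ)..(pt (N + 1)), F x := by
        apply intervalIntegral.integral_add_adjacent_intervals
        · exact hII F hintF _ _ le_rfl (hca N)
        · exact hII F hintF _ _ (hca N) (by rw [hcs]; linarith)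
      have hk := key (a + N) (by push_cast; linarith [Nat.cast_nonneg (α := ℝ) N])
        (pt N + 1) (by rw [hank N]; try linarith) (by rw [hank N]; try linarith)
      rw [hank N] at hk
      rw [Finset.sum_range_succ, ih, ← hsplit, hcs N, hk]
      ring
  -- limits
  have htN : Tendsto pt atTop atTop :=
    tendsto_atTop_add_const_left _ _ tendsto_natCast_atTop_atTop
  have hI : Tendsto (fun N : ℕ => ∫ x in (a : ℝ)..(pt N), F x) atTop
      (nhds (∫ x in Set.Ioi (a : ℝ), F x)) :=
    intervalIntegral_tendsto_integral_Ioi a (hintF.mono_set Set.Ioi_subset_Ici_self) htN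
  have hf0 : Tendsto (fun N : ℕ => f (pt N)) atTop (nhds 0) := hlim.comp htN
  have hL : Tendsto (fun N : ℕ => ∑ n ∈ Finset.range N, f (pt n)) atTop
      (nhds ((∫ x in Set.Ioi (a : ℝ), F x) + f a / 2 - 0 / 2)) := by
    have h := ((hI.add_const (f a / 2)).sub (hf0.div_const 2))
    apply h.congr'
    filter_upwards with N
    rw [hpartial N]
  have hT : Tendsto (fun N : ℕ => ∑ n ∈ Finset.range N, f (pt n)) atTop
      (nhds (∑' n : ℕ, f (pt n))) := hsumm.hasSum.tendsto_sum_nat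
  have heq := tendsto_nhds_unique hT hL
  have hIoi : ∫ x in Set.Ioi (a : ℝ), F x = ∫ x in Set.Ici (a : ℝ), F x :=
    (integral_Ici_eq_integral_Ioi).symm
  have hFadd : ∫ x in Set.Ici (a : ℝ), F x
      = (∫ x in Set.Ici (a : ℝ), f' x * ψ x) + ∫ x in Set.Ici (a : ℝ), f x :=
    integral_add hint' hint
  show ∑' n : ℕ, f (pt n) = _
  rw [heq, hIoi, hFadd]
  ring
end

section
/- Under hypotheses CLT and LD, one has limsup_{K→∞} limsup_{ε→0⁺} ε² Σ_{n > ⌊K/ε²⌋} m{x : S_nf(x)/n ≥ ε} = 0. -/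
/-!
Near `0` one has `I ε ≥ c ε²` with `c = I''(0) / 4`. For fixed `K > 0` and small `ε`, every
`n > K / ε²` satisfies `M / n < ε`, so LD bounds the tail by a geometric series:
`ε² ∑_{n > K/ε²} C e^{-I(ε) n} ≤ C ε² e^{-K I(ε)/ε²} / (1 - e^{-I(ε)}) ≤ C (1 + c) / c · e^{-c K}`,
using `x / (1 - e^{-x}) ≤ 1 + x`. This bound is uniform in small `ε` and tends to `0` as `K → ∞`.
-/

open Real MeasureTheory Filter

/-- The Birkhoff sum `S_n f = f + f∘T + ⋯ + f∘T^{n-1}`. -/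
def birkhoffSum' {X : Type*} (T : X → X) (f : X → ℝ) (n : ℕ) (x : X) : ℝ :=
  ∑ i ∈ Finset.range n, f (T^[i] x)

open Topology

theorem tsum_tail_le_of_le_exp {a : ℕ → ℝ} (ha0 : ∀ n, 0 ≤ a n) {N C r : ℝ}
    (hC : 0 ≤ C) (hr : 0 < r) (ha : ∀ n : ℕ, N < n → a n ≤ C * exp (-r * n)) :
    ∑' n : ℕ, (if ⌊N⌋₊ < n + 1 then a (n + 1) else 0) ≤ C * exp (-r * N) / (1 - exp (-r)) := by
  set k := ⌊N⌋₊
  set F : ℕ → ℝ := fun n => if k < n + 1 then a (n + 1) else 0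
  have hq0 : 0 ≤ exp (-r) := (exp_pos _).le
  have hq1 : exp (-r) < 1 := Real.exp_lt_one_iff.mpr (neg_neg_of_pos hr)
  have hN : N < k + 1 := Nat.lt_floor_add_one N
  have hshift : ∀ i, F (i + k) = a (i + k + 1) := fun i => if_pos (by omega)
  have hbound : ∀ i : ℕ, a (i + k + 1) ≤ C * exp (-r * (k + 1)) * exp (-r) ^ i := by
    intro i
    calc a (i + k + 1) ≤ C * exp (-r * ↑(i + k + 1)) := ha _ (by push_cast; linarith)
      _ = C * exp (-r * (k + 1)) * exp (-r) ^ i := by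
        rw [← exp_nat_mul, mul_assoc, ← exp_add]; push_cast; ring_nf
  have hgeom : Summable fun i : ℕ => C * exp (-r * (k + 1)) * exp (-r) ^ i :=
    (summable_geometric_of_lt_one hq0 hq1).mul_left _
  have hsummable : Summable fun i => F (i + k) := by
    simp only [hshift]
    exact hgeom.of_nonneg_of_le (fun i => ha0 _) hbound
  have hhead : ∑ i ∈ Finset.range k, F i = 0 :=
    Finset.sum_eq_zero fun i hi => if_neg (by simp at hi; omega)
  calc ∑' n, F n = ∑' i, a (i + k + 1) := by
        rw [← ((summable_nat_add_iff k).mp hsummable).sum_add_tsum_nat_add k, hhead, zero_add]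
        simp only [hshift]
    _ ≤ ∑' i : ℕ, C * exp (-r * (k + 1)) * exp (-r) ^ i :=
        (hsummable.congr hshift).tsum_le_tsum hbound hgeom
    _ = C * exp (-r * (k + 1)) / (1 - exp (-r)) := by
        rw [tsum_mul_left, tsum_geometric_of_lt_one hq0 hq1, div_eq_mul_inv]
    _ ≤ C * exp (-r * N) / (1 - exp (-r)) := by
        gcongr C * exp ?_ / _
        nlinarith

theorem div_one_sub_exp_neg_le {x : ℝ} (hx : 0 < x) : x / (1 - exp (-x)) ≤ 1 + x := by
  have hpos : 0 < 1 - exp (-x) := sub_pos.mpr (Real.exp_lt_one_iff.mpr (neg_neg_of_pos hx))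
  rw [div_le_iff₀ hpos]
  have : (1 + x) * exp (-x) ≤ 1 := by
    calc (1 + x) * exp (-x) ≤ exp x * exp (-x) := by gcongr; linarith [add_one_le_exp x]
      _ = 1 := by rw [← exp_add, add_neg_cancel, exp_zero]
  nlinarith

theorem sq_mul_tsum_tail_le {a : ℕ → ℝ} (ha0 : ∀ n, 0 ≤ a n) {ε K C c r : ℝ} (hε : 0 < ε)
    (hK : 0 ≤ K) (hC : 0 ≤ C) (hc : 0 < c) (hr : c * ε ^ 2 ≤ r)
    (ha : ∀ n : ℕ, K / ε ^ 2 < n → a n ≤ C * exp (-r * n)) :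
    ε ^ 2 * ∑' n : ℕ, (if ⌊K / ε ^ 2⌋₊ < n + 1 then a (n + 1) else 0) ≤
      C * (1 + c * ε ^ 2) / c * exp (-(c * K)) := by
  have hcε : 0 < c * ε ^ 2 := by positivity
  have hden : 0 < 1 - exp (-(c * ε ^ 2)) :=
    sub_pos.mpr (Real.exp_lt_one_iff.mpr (neg_neg_of_pos hcε))
  calc ε ^ 2 * ∑' n : ℕ, (if ⌊K / ε ^ 2⌋₊ < n + 1 then a (n + 1) else 0)
      ≤ ε ^ 2 * (C * exp (-r * (K / ε ^ 2)) / (1 - exp (-r))) := by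
        gcongr
        exact tsum_tail_le_of_le_exp ha0 hC (hcε.trans_le hr) ha
    _ ≤ ε ^ 2 * (C * exp (-(c * K)) / (1 - exp (-(c * ε ^ 2)))) := by
        have hexp : -r * (K / ε ^ 2) ≤ -(c * K) := by
          rw [neg_mul, neg_le_neg_iff, mul_div_assoc', le_div_iff₀ (by positivity)]
          nlinarith
        gcongr
    _ = C / c * exp (-(c * K)) * (c * ε ^ 2 / (1 - exp (-(c * ε ^ 2)))) := by
        field_simp
    _ ≤ C / c * exp (-(c * K)) * (1 + c * ε ^ 2) := by
        gcongr
        exact div_one_sub_exp_neg_le hcε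
    _ = C * (1 + c * ε ^ 2) / c * exp (-(c * K)) := by ring

theorem eventually_mul_sq_le_of_hasDerivAt_deriv {I : ℝ → ℝ} {c L : ℝ} (hc : c < L / 2)
    (hdiff : ∀ᶠ x in 𝓝 0, DifferentiableAt ℝ I x) (hI0 : I 0 = 0) (hI'0 : deriv I 0 = 0)
    (hL : HasDerivAt (deriv I) L 0) :
    ∀ᶠ ε in 𝓝[>] 0, c * ε ^ 2 ≤ I ε := by
  have hslope : ∀ᶠ t in 𝓝[>] 0, 2 * c * t < deriv I t := by
    have hlim := (hasDerivAt_iff_tendsto_slope.mp hL).mono_left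
      (nhdsWithin_mono _ fun t (ht : 0 < t) => ht.ne')
    filter_upwards [hlim.eventually (eventually_gt_nhds (by linarith : 2 * c < L)),
      self_mem_nhdsWithin] with t ht (htpos : 0 < t)
    rwa [slope_def_field, hI'0, sub_zero, sub_zero, lt_div_iff₀ htpos] at ht
  have hnear : ∀ᶠ t in 𝓝[≥] 0, DifferentiableAt ℝ I t ∧ (0 < t → 2 * c * t < deriv I t) :=
    nhdsWithin_le_nhds (hdiff.and (eventually_nhdsWithin_iff.mp hslope))
  obtain ⟨a, ha, hsub⟩ := mem_nhdsGE_iff_exists_Ico_subset.mp hnear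
  set g : ℝ → ℝ := fun t => I t - c * t ^ 2
  have hgdiff : ∀ t ∈ Set.Ico 0 a, HasDerivAt g (deriv I t - 2 * c * t) t := by
    intro t ht
    exact ((hsub ht).1.hasDerivAt.sub ((hasDerivAt_pow 2 t).const_mul c)).congr_deriv
      (by norm_num; ring)
  have hmono : MonotoneOn g (Set.Ico 0 a) := by
    refine monotoneOn_of_deriv_nonneg (convex_Ico 0 a) ?_ ?_ ?_
    · exact fun t ht => (hgdiff t ht).continuousAt.continuousWithinAt
    · rw [interior_Ico]
      exact fun t ht => (hgdiff t (Set.Ioo_subset_Ico_self ht)).differentiableAt.differentiableWithinAt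
    · rw [interior_Ico]
      intro t ht
      rw [(hgdiff t (Set.Ioo_subset_Ico_self ht)).deriv, sub_nonneg]
      exact ((hsub (Set.Ioo_subset_Ico_self ht)).2 ht.1).le
  filter_upwards [Ioo_mem_nhdsGT ha] with ε hε
  have := hmono ⟨le_rfl, ha⟩ ⟨hε.1.le, hε.2⟩ hε.1.le
  simp only [g, hI0] at this
  linarith

theorem eventually_mul_sq_le_of_contDiffOn {I : ℝ → ℝ} {s : Set ℝ} {c : ℝ} (hs : IsOpen s)
    (h0 : (0 : ℝ) ∈ s) (hI : ContDiffOn ℝ 2 I s) (hI0 : I 0 = 0) (hI'0 : deriv I 0 = 0)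
    (hc : c < deriv (deriv I) 0 / 2) :
    ∀ᶠ ε in 𝓝[>] 0, c * ε ^ 2 ≤ I ε := by
  refine eventually_mul_sq_le_of_hasDerivAt_deriv hc ?_ hI0 hI'0 ?_
  · exact mem_of_superset (hs.mem_nhds h0) fun x hx =>
      (hI.differentiableOn (by norm_num)).differentiableAt (hs.mem_nhds hx)
  · exact (((hI.deriv_of_isOpen (m := 1) hs (by norm_num)).differentiableOn
      (by norm_num)).differentiableAt (hs.mem_nhds h0)).hasDerivAt

theorem limsup_limsup_eq_zero_of_le {α β : Type*} {l : Filter α} {l' : Filter β} [l.NeBot]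
    [l'.NeBot] {u : α → β → ℝ} {φ : α → ℝ} (h0 : ∀ K ε, 0 ≤ u K ε)
    (hle : ∀ᶠ K in l, ∀ᶠ ε in l', u K ε ≤ φ K) (hφ : Tendsto φ l (𝓝 0)) :
    limsup (fun K => limsup (u K) l') l = 0 := by
  refine Tendsto.limsup_eq (tendsto_of_tendsto_of_tendsto_of_le_of_le' tendsto_const_nhds hφ ?_ ?_)
  · filter_upwards [hle] with K hK
    exact le_limsup_of_frequently_le (Eventually.of_forall (h0 K)).frequently
      (isBoundedUnder_of_eventually_le hK)
  · filter_upwards [hle] with K hK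
    exact limsup_le_of_le (isCoboundedUnder_le_of_le l' (h0 K)) hK

theorem limsup_limsup_tail_zero_general
    {X : Type*} [MeasurableSpace X] (m : Measure X)
    (T : X → X)
    (f : X → ℝ)
    (δ M C : ℝ) (hδ : 0 < δ) (hC : 0 < C) (I : ℝ → ℝ)
    (hI : ContDiffOn ℝ 2 I (Set.Ioo (-δ) δ))
    (hI0 : I 0 = 0) (hI'0 : deriv I 0 = 0) (hI''0 : 0 < deriv (deriv I) 0)
    -- LD: effective large deviation upper bounds
    (hLD : ∀ n : ℕ, 1 ≤ n → ∀ ε ∈ Set.Ioo (0 : ℝ) δ, M / n < ε →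
      (m {x | ε ≤ birkhoffSum' T f n x / n}).toReal ≤ C * Real.exp (-I ε * n) ∧
      (m {x | birkhoffSum' T f n x / n ≤ -ε}).toReal ≤ C * Real.exp (-I (-ε) * n)) :
    Filter.limsup (fun K : ℝ =>
        Filter.limsup (fun ε : ℝ =>
            ε ^ 2 * ∑' n : ℕ,
              (if Nat.floor (K / ε ^ 2) < n + 1 then
                (m {x | ε ≤ birkhoffSum' T f (n + 1) x / (n + 1)}).toReal else 0))
          (nhdsWithin 0 (Set.Ioi 0)))
      atTop = 0 := by
  set c := deriv (deriv I) 0 / 4 with hc_def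
  have hc : 0 < c := by positivity
  have hquad : ∀ᶠ ε in 𝓝[>] 0, c * ε ^ 2 ≤ I ε :=
    eventually_mul_sq_le_of_contDiffOn isOpen_Ioo ⟨by linarith, hδ⟩ hI hI0 hI'0 (by linarith)
  refine limsup_limsup_eq_zero_of_le (φ := fun K => C * (1 + c) / c * exp (-(c * K)))
    (fun K ε => ?_) ?_ ?_
  · exact mul_nonneg (sq_nonneg ε) (tsum_nonneg fun n => by split_ifs <;> positivity)
  · filter_upwards [eventually_gt_atTop 0] with K hK
    have hMε : ∀ᶠ ε in 𝓝[>] (0 : ℝ), M * ε < K := nhdsWithin_le_nhds <|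
      ((continuous_const_mul M).tendsto' 0 0 (mul_zero M)).eventually (eventually_lt_nhds hK)
    filter_upwards [hquad, hMε, Ioo_mem_nhdsGT (lt_min hδ one_pos)] with ε hIε hMε ⟨hε, hεδ1⟩
    obtain ⟨hεδ, hε1⟩ := lt_min_iff.mp hεδ1
    have hLDtail : ∀ n : ℕ, K / ε ^ 2 < n →
        (m {x | ε ≤ birkhoffSum' T f n x / n}).toReal ≤ C * exp (-I ε * n) := fun n hn => by
      have hn0 : (0 : ℝ) < n := (by positivity : 0 < K / ε ^ 2).trans hn
      refine (hLD n (Nat.cast_pos.mp hn0) ε ⟨hε, hεδ⟩ ?_).1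
      rw [div_lt_iff₀ (by positivity)] at hn
      rw [div_lt_iff₀ hn0]
      -- `M < K / ε < n ε`
      nlinarith
    have htail := sq_mul_tsum_tail_le (fun _ => ENNReal.toReal_nonneg) hε hK.le hC.le hc hIε hLDtail
    simp only [Nat.cast_add, Nat.cast_one] at htail
    refine htail.trans ?_
    gcongr
    exact mul_le_of_le_one_right hc.le (pow_le_one₀ hε.le hε1.le)
  · exact (tendsto_exp_neg_atTop_nhds_zero.comp (tendsto_id.const_mul_atTop hc)).const_mul _
      |>.trans (by rw [mul_zero])

theorem limsup_limsup_tail_zero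
    {X : Type*} [MeasurableSpace X] (m : Measure X) [IsProbabilityMeasure m]
    (T : X → X) (hT : MeasurePreserving T m m)
    (f : X → ℝ) (hf : Measurable f) (hmean : ∫ x, f x ∂m = 0)
    (σ : ℝ) (hσ : 0 < σ)
    -- CLT: S_n f / (σ √n) converges in distribution to the standard normal
    (hCLT : ∀ y : ℝ,
      Tendsto (fun n : ℕ =>
          (m {x | birkhoffSum' T f n x / (σ * Real.sqrt n) ≤ y}).toReal)
        atTop (nhds (stdNormalCDF y)))
    (δ M C : ℝ) (hδ : 0 < δ) (hM : 0 < M) (hC : 0 < C) (I : ℝ → ℝ)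
    (hI : ContDiffOn ℝ 2 I (Set.Ioo (-δ) δ))
    (hInonneg : ∀ ε ∈ Set.Ioo (-δ) δ, 0 ≤ I ε)
    (hI0 : I 0 = 0) (hI'0 : deriv I 0 = 0) (hI''0 : 0 < deriv (deriv I) 0)
    -- LD: effective large deviation upper bounds
    (hLD : ∀ n : ℕ, 1 ≤ n → ∀ ε ∈ Set.Ioo (0 : ℝ) δ, M / n < ε →
      (m {x | ε ≤ birkhoffSum' T f n x / n}).toReal ≤ C * Real.exp (-I ε * n) ∧
      (m {x | birkhoffSum' T f n x / n ≤ -ε}).toReal ≤ C * Real.exp (-I (-ε) * n)) :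
    Filter.limsup (fun K : ℝ =>
        Filter.limsup (fun ε : ℝ =>
            ε ^ 2 * ∑' n : ℕ,
              (if Nat.floor (K / ε ^ 2) < n + 1 then
                (m {x | ε ≤ birkhoffSum' T f (n + 1) x / (n + 1)}).toReal else 0))
          (nhdsWithin 0 (Set.Ioi 0)))
      atTop = 0 :=
  limsup_limsup_tail_zero_general m T f δ M C hδ hC I hI hI0 hI'0 hI''0 hLD
end

section
/- For σ > 0, lim_{ε→0⁺} (1/(-log ε)) Σ_{n=1}^∞ (1/n)·Φ(-ε√n/σ) = 1, where Φ is the standard normal distribution function. -/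
open Real MeasureTheory Filter

/-!
Split the series at `n ≈ a⁻²`, where `a = ε / σ`. Below the split, `Φ(-a√n) = 1/2 + O(a√n)`, so
the head is `(1/2) log a⁻² + O(a ∑_{n ≤ a⁻²} n^{-1/2}) = -log a + O(1)`. Above it, the Chernoff
bound `Φ(-x) ≤ e^{-x²/2}/2` and `1/n ≤ a²` turn the tail into `a²` times a geometric series of
ratio `e^{-a²/2}`, which is `O(1)`. Hence the series is `-log ε + O(1)`.
-/

open Set Asymptotics Topology

lemma integral_gaussian_Iic (b : ℝ) :
    ∫ x in Iic (0 : ℝ), exp (-b * x ^ 2) = √(π / b) / 2 := by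
  rw [← neg_zero, ← integral_comp_neg_Ioi, ← integral_gaussian_Ioi]
  simp

lemma integrable_exp_neg_sq_div_two : Integrable fun t : ℝ => exp (-t ^ 2 / 2) := by
  simpa [neg_div, div_eq_inv_mul] using integrable_exp_neg_mul_sq (b := 1 / 2) (by norm_num)

lemma setIntegral_Iic_comp_add_right {E : Type*} [NormedAddCommGroup E] [NormedSpace ℝ E]
    (f : ℝ → E) (a c : ℝ) : ∫ t in Iic a, f (t + c) = ∫ t in Iic (a + c), f t := by
  have hemb : MeasurableEmbedding fun t : ℝ => t + c :=
    (Homeomorph.addRight c).isClosedEmbedding.measurableEmbedding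
  have h := hemb.setIntegral_map (μ := volume) f (Iic (a + c))
  rw [map_add_right_eq_self] at h
  rw [h]
  congr 1
  ext x
  simp

lemma stdNormalCDF_nonneg (y : ℝ) : 0 ≤ stdNormalCDF y :=
  mul_nonneg (by positivity) (setIntegral_nonneg measurableSet_Iic fun t _ => (exp_pos _).le)

lemma integral_Iic_zero_exp_neg_sq_div_two :
    ∫ t in Iic (0 : ℝ), exp (-t ^ 2 / 2) = √(2 * π) / 2 := by
  convert integral_gaussian_Iic (1 / 2) using 3 with t
  · ring_nf
  · field_simp

lemma stdNormalCDF_zero : stdNormalCDF 0 = 1 / 2 := by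
  rw [stdNormalCDF, integral_Iic_zero_exp_neg_sq_div_two]
  field_simp

lemma half_sub_le_stdNormalCDF_neg {x : ℝ} (hx : 0 ≤ x) :
    1 / 2 - x / √(2 * π) ≤ stdNormalCDF (-x) := by
  have hint := integrable_exp_neg_sq_div_two.integrableOn (s := Iic (0 : ℝ))
  have hint' := integrable_exp_neg_sq_div_two.integrableOn (s := Iic (-x))
  have hstrip : ∫ t in (-x)..0, exp (-t ^ 2 / 2) ≤ x := by
    calc ∫ t in (-x)..0, exp (-t ^ 2 / 2) ≤ ∫ _ in (-x)..0, (1 : ℝ) :=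
          intervalIntegral.integral_mono_on (by linarith)
            (integrable_exp_neg_sq_div_two.intervalIntegrable) intervalIntegrable_const
            fun t _ => exp_le_one_iff.2 (by nlinarith [sq_nonneg t])
      _ = x := by simp
  have hdiff : stdNormalCDF 0 - stdNormalCDF (-x) ≤ x / √(2 * π) := by
    rw [stdNormalCDF, stdNormalCDF, ← mul_sub, intervalIntegral.integral_Iic_sub_Iic hint' hint,
      div_eq_inv_mul]
    gcongr
  linarith [stdNormalCDF_zero]

lemma stdNormalCDF_neg_le_half_mul_exp {x : ℝ} (hx : 0 ≤ x) :
    stdNormalCDF (-x) ≤ 1 / 2 * exp (-x ^ 2 / 2) := by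
  -- On `t ≤ -x` we have `-t²/2 ≤ -x²/2 - (t + x)²/2`; then shift by `x`.
  have hshift : ∫ t in Iic (-x), exp (-t ^ 2 / 2)
      ≤ exp (-x ^ 2 / 2) * ∫ t in Iic (-x), exp (-(t + x) ^ 2 / 2) := by
    rw [← integral_const_mul]
    refine setIntegral_mono_on integrable_exp_neg_sq_div_two.integrableOn
      ((integrable_exp_neg_sq_div_two.comp_add_right x).const_mul _).integrableOn
      measurableSet_Iic fun t ht => ?_
    rw [← exp_add]
    exact exp_le_exp.2 (by nlinarith [mul_nonneg hx (sub_nonneg.2 (mem_Iic.1 ht))])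
  have h := setIntegral_Iic_comp_add_right (fun t => exp (-t ^ 2 / 2)) (-x) x
  rw [neg_add_cancel, integral_Iic_zero_exp_neg_sq_div_two] at h
  rw [h] at hshift
  calc stdNormalCDF (-x) ≤ (√(2 * π))⁻¹ * (exp (-x ^ 2 / 2) * (√(2 * π) / 2)) := by
        rw [stdNormalCDF]; gcongr
    _ = 1 / 2 * exp (-x ^ 2 / 2) := by field_simp

lemma stdNormalCDF_neg_le_half {x : ℝ} (hx : 0 ≤ x) : stdNormalCDF (-x) ≤ 1 / 2 := by
  have := exp_le_one_iff.2 (by nlinarith [sq_nonneg x] : -x ^ 2 / 2 ≤ 0)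
  linarith [stdNormalCDF_neg_le_half_mul_exp hx]

lemma sum_range_one_div_succ_eq_harmonic (N : ℕ) :
    ∑ n ∈ Finset.range N, 1 / (n + 1 : ℝ) = harmonic N := by
  simp [harmonic]

lemma sum_range_one_div_sqrt_succ_le (M : ℕ) :
    ∑ n ∈ Finset.range M, 1 / √(n + 1) ≤ 2 * √M := by
  induction M with
  | zero => simp
  | succ k ih =>
    -- `1 / √(k + 1) ≤ 2 (√(k + 1) - √k)` since `√k ≤ √(k + 1)`.
    have hk : √(k + 1) ^ 2 = (k : ℝ) + 1 := sq_sqrt (by positivity)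
    have hk' : √k ^ 2 = (k : ℝ) := sq_sqrt (by positivity)
    have hpos : 0 < √(k + 1) := sqrt_pos.2 (by positivity)
    have hstep : 1 / √(k + 1) ≤ 2 * √(k + 1) - 2 * √k := by
      rw [div_le_iff₀ hpos]
      nlinarith [sq_nonneg (√(k + 1) - √k), sqrt_nonneg (k : ℝ)]
    rw [Finset.sum_range_succ]
    push_cast
    linarith

lemma tsum_exp_neg_pow_succ_le_inv {c : ℝ} (hc : 0 < c) :
    ∑' n : ℕ, exp (-c) ^ (n + 1) ≤ c⁻¹ := by
  have hr : exp (-c) < 1 := exp_lt_one_iff.2 (neg_neg_iff_pos.2 hc)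
  have hsum : ∑' n : ℕ, exp (-c) ^ (n + 1) = (exp c - 1)⁻¹ := by
    simp_rw [pow_succ, tsum_mul_right, tsum_geometric_of_lt_one (exp_pos _).le hr, exp_neg]
    have hexp : 1 < exp c := one_lt_exp_iff.2 hc
    field_simp
  rw [hsum]
  exact inv_anti₀ hc (by linarith [add_one_le_exp c])

/-- `Φ(-a√(n+1)) / (n+1)`, so that `spataruSeries a = ∑_{n ≥ 1} Φ(-a√n) / n`; the theorem's
series is `spataruSeries (ε / σ)`. -/
noncomputable def spataruTerm (a : ℝ) (n : ℕ) : ℝ :=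
  1 / (n + 1 : ℝ) * stdNormalCDF (-(a * √(n + 1)))

noncomputable def spataruSeries (a : ℝ) : ℝ :=
  ∑' n : ℕ, spataruTerm a n

section spataruSeries

variable {a : ℝ}

lemma spataruTerm_nonneg (a : ℝ) (n : ℕ) : 0 ≤ spataruTerm a n :=
  mul_nonneg (by positivity) (stdNormalCDF_nonneg _)

lemma stdNormalCDF_neg_mul_sqrt_le (ha : 0 ≤ a) (n : ℕ) :
    stdNormalCDF (-(a * √(n + 1))) ≤ 1 / 2 * exp (-(a ^ 2 / 2)) ^ (n + 1) := by
  refine (stdNormalCDF_neg_le_half_mul_exp (by positivity)).trans_eq ?_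
  rw [← exp_nat_mul, mul_pow, sq_sqrt (by positivity)]
  push_cast
  ring_nf

lemma summable_spataruTerm (ha : 0 < a) :
    Summable (spataruTerm a) := by
  have hr : exp (-(a ^ 2 / 2)) < 1 := exp_lt_one_iff.2 (neg_neg_iff_pos.2 (by positivity))
  refine Summable.of_nonneg_of_le (spataruTerm_nonneg a)
    (fun n => ?_) (((summable_nat_add_iff 1).2
      (summable_geometric_of_lt_one (exp_pos _).le hr)).mul_left (1 / 2))
  calc spataruTerm a n
      ≤ 1 * (1 / 2 * exp (-(a ^ 2 / 2)) ^ (n + 1)) :=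
        mul_le_mul (div_le_one_of_le₀ (by linarith [n.cast_nonneg (α := ℝ)]) (by positivity))
          (stdNormalCDF_neg_mul_sqrt_le ha.le n) (stdNormalCDF_nonneg _) zero_le_one
    _ = 1 / 2 * exp (-(a ^ 2 / 2)) ^ (n + 1) := one_mul _

lemma sum_range_spataruTerm_le (ha : 0 ≤ a) (N : ℕ) :
    ∑ n ∈ Finset.range N, spataruTerm a n ≤ (1 + log N) / 2 := by
  calc ∑ n ∈ Finset.range N, spataruTerm a n
      ≤ ∑ n ∈ Finset.range N, 1 / (n + 1 : ℝ) * (1 / 2) := by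
        gcongr with n
        exact mul_le_mul_of_nonneg_left (stdNormalCDF_neg_le_half (by positivity)) (by positivity)
    _ = harmonic N / 2 := by
        rw [← Finset.sum_mul, sum_range_one_div_succ_eq_harmonic]; ring
    _ ≤ (1 + log N) / 2 := by
        gcongr
        exact_mod_cast harmonic_le_one_add_log N

lemma tsum_spataruTerm_nat_add_le_one (ha : 0 < a) {N : ℕ} (hN : (a ^ 2)⁻¹ ≤ N) :
    ∑' n : ℕ, spataruTerm a (n + N) ≤ 1 := by
  set r := exp (-(a ^ 2 / 2))
  have hr : r ≤ 1 := exp_le_one_iff.2 (by nlinarith [sq_nonneg a])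
  have hterm (n : ℕ) : spataruTerm a (n + N)
      ≤ a ^ 2 / 2 * r ^ (n + 1) := by
    have hinv : 1 / ((n + N : ℕ) + 1 : ℝ) ≤ a ^ 2 := by
      rw [div_le_iff₀ (by positivity), ← inv_le_iff_one_le_mul₀' (by positivity)]
      push_cast
      linarith [n.cast_nonneg (α := ℝ)]
    calc spataruTerm a (n + N)
        ≤ a ^ 2 * (1 / 2 * r ^ (n + N + 1)) :=
          mul_le_mul hinv (stdNormalCDF_neg_mul_sqrt_le ha.le _) (stdNormalCDF_nonneg _)
            (sq_nonneg a)
      _ ≤ a ^ 2 * (1 / 2 * r ^ (n + 1)) := by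
          gcongr ?_ * (_ * ?_)
          exact pow_le_pow_of_le_one (exp_pos _).le hr (by omega)
      _ = a ^ 2 / 2 * r ^ (n + 1) := by ring
  have hgeom : Summable fun n : ℕ => r ^ (n + 1) :=
    (summable_nat_add_iff 1).2 (summable_geometric_of_lt_one (exp_pos _).le
      (exp_lt_one_iff.2 (neg_neg_iff_pos.2 (by positivity))))
  calc ∑' n : ℕ, spataruTerm a (n + N)
      ≤ ∑' n : ℕ, a ^ 2 / 2 * r ^ (n + 1) :=
        Summable.tsum_le_tsum hterm ((summable_nat_add_iff N).2 (summable_spataruTerm ha))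
          (hgeom.mul_left _)
    _ ≤ a ^ 2 / 2 * (a ^ 2 / 2)⁻¹ := by
        rw [tsum_mul_left]
        gcongr
        exact tsum_exp_neg_pow_succ_le_inv (by positivity)
    _ = 1 := mul_inv_cancel₀ (by positivity)

lemma spataruSeries_le (ha : 0 < a) (ha1 : a ≤ 1) : spataruSeries a ≤ -log a + 2 := by
  set N := ⌈(a ^ 2)⁻¹⌉₊
  have hN : (a ^ 2)⁻¹ ≤ N := Nat.le_ceil _
  have hN2 : (N : ℝ) ≤ 2 * (a ^ 2)⁻¹ := by
    have : 1 ≤ (a ^ 2)⁻¹ := one_le_inv₀ (by positivity) |>.2 (pow_le_one₀ ha.le ha1)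
    linarith [Nat.ceil_lt_add_one (inv_nonneg.2 (sq_nonneg a))]
  have hlogN : log N ≤ log 2 - 2 * log a := by
    calc log N ≤ log (2 * (a ^ 2)⁻¹) := log_le_log (by positivity) hN2
      _ = log 2 - 2 * log a := by
          rw [log_mul two_ne_zero (by positivity), log_inv, log_pow]; push_cast; ring
  have hlog2 : log 2 ≤ 1 := by linarith [log_le_sub_one_of_pos (two_pos (α := ℝ))]
  rw [spataruSeries, ← (summable_spataruTerm ha).sum_add_tsum_nat_add N]
  linarith [sum_range_spataruTerm_le ha.le N, tsum_spataruTerm_nat_add_le_one ha hN]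

lemma half_div_sub_le_spataruTerm (ha : 0 ≤ a) (n : ℕ) :
    1 / 2 * (1 / (n + 1 : ℝ)) - a / √(2 * π) * (1 / √(n + 1))
      ≤ spataruTerm a n := by
  have hsqrt : √(n + 1 : ℝ) * √(n + 1) = n + 1 := mul_self_sqrt (by positivity)
  calc 1 / 2 * (1 / (n + 1 : ℝ)) - a / √(2 * π) * (1 / √(n + 1))
      = 1 / (n + 1 : ℝ) * (1 / 2 - a * √(n + 1) / √(2 * π)) := by
        field_simp
        linear_combination 2 * a * hsqrt
    _ ≤ 1 / (n + 1 : ℝ) * stdNormalCDF (-(a * √(n + 1))) := by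
        gcongr
        exact half_sub_le_stdNormalCDF_neg (by positivity)

lemma le_spataruSeries (ha : 0 < a) : -log a - 1 ≤ spataruSeries a := by
  set M := ⌊(a ^ 2)⁻¹⌋₊
  have hlogM : -2 * log a ≤ log (M + 1) := by
    rw [show -2 * log a = log ((a ^ 2)⁻¹) by rw [log_inv, log_pow]; push_cast; ring]
    exact log_le_log (by positivity) (Nat.lt_floor_add_one _).le
  have hharm : log (M + 1) ≤ harmonic M := by exact_mod_cast log_add_one_le_harmonic M
  have herr : a / √(2 * π) * ∑ n ∈ Finset.range M, 1 / √(n + 1) ≤ 1 := by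
    have hsqrtM : √M ≤ a⁻¹ := by
      rw [sqrt_le_left (by positivity), inv_pow]
      exact Nat.floor_le (by positivity)
    have hcoef : 2 * (a / √(2 * π)) * a⁻¹ ≤ 1 := by
      rw [mul_assoc, div_mul_eq_mul_div, mul_inv_cancel₀ ha.ne', mul_one_div,
        div_le_one (by positivity)]
      exact le_sqrt_of_sq_le (by nlinarith [pi_gt_three])
    calc a / √(2 * π) * ∑ n ∈ Finset.range M, 1 / √(n + 1) ≤ a / √(2 * π) * (2 * a⁻¹) := by
          gcongr; linarith [sum_range_one_div_sqrt_succ_le M]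
      _ ≤ 1 := by linarith
  have hhead := Finset.sum_le_sum fun n (_ : n ∈ Finset.range M) =>
    half_div_sub_le_spataruTerm ha.le n
  rw [Finset.sum_sub_distrib, ← Finset.mul_sum, ← Finset.mul_sum,
    sum_range_one_div_succ_eq_harmonic] at hhead
  have hhead_le := (summable_spataruTerm ha).sum_le_tsum (Finset.range M)
    fun n _ => spataruTerm_nonneg a n
  rw [spataruSeries]
  linarith

lemma isBigO_spataruSeries_add_log :
    (fun a => spataruSeries a + log a) =O[𝓝[>] 0] fun _ => (1 : ℝ) := by
  refine IsBigO.of_bound 2 ?_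
  filter_upwards [Ioc_mem_nhdsGT one_pos] with a ⟨ha, ha1⟩
  rw [norm_one, mul_one, Real.norm_eq_abs, abs_le]
  constructor <;> linarith [spataruSeries_le ha ha1, le_spataruSeries ha]

end spataruSeries

theorem spataru_log_asymptotics (σ : ℝ) (hσ : 0 < σ) :
    Tendsto (fun ε : ℝ =>
        (1 / (-Real.log ε)) * ∑' n : ℕ,
          (1 / (n + 1 : ℝ)) * stdNormalCDF (-(ε * Real.sqrt (n + 1) / σ)))
      (nhdsWithin 0 (Set.Ioi 0)) (nhds 1) := by
  have hlog : Tendsto (fun ε : ℝ => -log ε) (𝓝[>] 0) atTop :=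
    tendsto_neg_atBot_atTop.comp tendsto_log_nhdsGT_zero
  have hscale : Tendsto (· / σ) (𝓝[>] (0 : ℝ)) (𝓝[>] 0) :=
    tendsto_nhdsWithin_of_tendsto_nhds_of_eventually_within _
      ((continuous_id.div_const σ).tendsto' 0 0 (zero_div σ) |>.mono_left nhdsWithin_le_nhds)
      (eventually_nhdsWithin_of_forall fun ε hε => div_pos hε hσ)
  have hbdd : (fun ε => spataruSeries (ε / σ) - -log ε) =O[𝓝[>] 0] fun _ => (1 : ℝ) := by
    refine ((isBigO_spataruSeries_add_log.comp_tendsto hscale).add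
      (isBigO_const_const (log σ) one_ne_zero _)).congr' ?_ .rfl
    filter_upwards [self_mem_nhdsWithin] with ε hε
    simp only [Function.comp_apply, log_div (ne_of_gt hε) hσ.ne']
    ring
  have hequiv : (fun ε => spataruSeries (ε / σ)) ~[𝓝[>] 0] fun ε => -log ε :=
    hbdd.trans_isLittleO ((isLittleO_one_left_iff ℝ).2 (tendsto_norm_atTop_atTop.comp hlog))
  convert (isEquivalent_iff_tendsto_one (hlog.eventually_ne_atTop 0)).1 hequiv using 2 with ε
  simp only [Pi.div_apply, spataruSeries, spataruTerm, div_mul_eq_mul_div, one_mul]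
end
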